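/- Let H be a complex Hilbert space and H(t) = −iA(t) where A : ℝ → B(H) is strongly continuous with each A(t) skew-adjoint (i.e., H(t) bounded self-adjoint). Then the unique strong solution V of V'(t) = A(t)V(t) with V(0) = 1 is unitary for all t ∈ ℝ, and U(t,s) := V(t)V(s)⁻¹ defines a two-parameter unitary family satisfying the cocycle property U(t,s)U(s,r) = U(t,r) and the propagator equation d/dt U(t,s)ψ = −iH(t)U(t,s)ψ for all ψ ∈ H. -/

import Mathlib

/-!
Differentiating `⟪V t φ, V t ψ⟫` and using `A(t)* = -A(t)` shows that each `V t` is an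
isometry. Since `‖A‖` is locally bounded (uniform boundedness), `V` is locally Lipschitz in
operator norm. An isometry at distance `< 1` from a unitary `u` is unitary
(`u* v = 1 - u* (u - v)` is invertible), so being unitary is locally constant along `V`,
and `V 0 = 1` propagates to all `t`.
-/

open Filter Topology ContinuousLinearMap

theorem CStarRing.norm_le_one_of_star_mul_self_eq_one {R : Type*} [NormedRing R] [StarRing R]
    [CStarRing R] {v : R} (hv : star v * v = 1) : ‖v‖ ≤ 1 := by
  have hv' : ‖v‖ * ‖v‖ = ‖(1 : R)‖ := by rw [← CStarRing.norm_star_mul_self, hv]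
  have h1 : ‖(1 : R)‖ * ‖(1 : R)‖ = ‖(1 : R)‖ := by
    rw [← CStarRing.norm_star_mul_self, star_one, one_mul]
  have h1_le : ‖(1 : R)‖ ≤ 1 := by nlinarith [norm_nonneg (1 : R)]
  nlinarith [norm_nonneg v]

theorem Unitary.mem_of_norm_sub_lt_one {R : Type*} [NormedRing R] [CompleteSpace R] [StarRing R]
    [CStarRing R] {u v : R} (hu : u ∈ unitary R) (hv : star v * v = 1) (huv : ‖u - v‖ < 1) :
    v ∈ unitary R := by
  have hnorm : ‖star u * (u - v)‖ < 1 := by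
    rwa [CStarRing.norm_mem_unitary_mul _ (Unitary.star_mem hu)]
  have hunit : IsUnit (star u * v) := by
    have : star u * v = 1 - star u * (u - v) := by
      rw [mul_sub, Unitary.star_mul_self_of_mem hu, sub_sub_cancel]
    exact this ▸ (Units.oneSub _ hnorm).isUnit
  have hv_unit : IsUnit v := by
    rw [← one_mul v, ← Unitary.mul_star_self_of_mem hu, mul_assoc]
    exact (Unitary.isUnit_coe (U := ⟨u, hu⟩)).mul hunit
  exact hv_unit.mem_unitary_of_star_mul_self hv

theorem Unitary.mem_of_continuous_of_star_mul_self {X R : Type*} [TopologicalSpace X]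
    [PreconnectedSpace X] [NormedRing R] [CompleteSpace R] [StarRing R] [CStarRing R]
    {v : X → R} (hv : Continuous v) (hiso : ∀ x, star (v x) * v x = 1) {x₀ : X}
    (hx₀ : v x₀ ∈ unitary R) (x : X) :
    v x ∈ unitary R := by
  have hloc : IsLocallyConstant fun x => v x ∈ unitary R := by
    refine (IsLocallyConstant.iff_eventually_eq _).2 fun x => ?_
    have hnear : ∀ᶠ y in 𝓝 x, ‖v y - v x‖ < 1 := by
      simpa [dist_eq_norm] using (hv.tendsto x).eventually (Metric.ball_mem_nhds (v x) one_pos)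
    filter_upwards [hnear] with y hy
    exact propext ⟨fun h => mem_of_norm_sub_lt_one h (hiso x) hy,
      fun h => mem_of_norm_sub_lt_one h (hiso y) (by rwa [norm_sub_rev])⟩
  exact (hloc.apply_eq_of_preconnectedSpace x₀ x) ▸ hx₀

theorem ContinuousLinearMap.exists_eventually_norm_le_of_continuous_apply
    {X 𝕜 E F : Type*} [TopologicalSpace X] [WeaklyLocallyCompactSpace X]
    [NontriviallyNormedField 𝕜] [NormedAddCommGroup E] [NormedSpace 𝕜 E] [CompleteSpace E]
    [NormedAddCommGroup F] [NormedSpace 𝕜 F] {A : X → E →L[𝕜] F}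
    (hA : ∀ ψ, Continuous fun t => A t ψ) (t : X) :
    ∃ M, ∀ᶠ s in 𝓝 t, ‖A s‖ ≤ M := by
  obtain ⟨K, hK, hKt⟩ := exists_compact_mem_nhds t
  obtain ⟨M, hM⟩ := banach_steinhaus (g := fun s : K => A s) fun ψ => by
    obtain ⟨C, hC⟩ := hK.exists_bound_of_continuousOn (hA ψ).continuousOn
    exact ⟨C, fun s => hC s s.2⟩
  exact ⟨M, Filter.mem_of_superset hKt fun s hs => hM ⟨s, hs⟩⟩

theorem ContinuousLinearMap.lipschitzOnWith_of_hasDerivWithinAt_apply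
    {𝕜 E F : Type*} [NontriviallyNormedField 𝕜] [NormedAddCommGroup E] [NormedSpace 𝕜 E]
    [NormedAddCommGroup F] [NormedSpace 𝕜 F] [NormedSpace ℝ F] {V D : ℝ → E →L[𝕜] F}
    {s : Set ℝ} (hs : Convex ℝ s)
    (hV : ∀ ψ, ∀ t ∈ s, HasDerivWithinAt (fun τ => V τ ψ) (D t ψ) s t) {M : NNReal}
    (hD : ∀ t ∈ s, ‖D t‖ ≤ M) : LipschitzOnWith M V s := by
  refine LipschitzOnWith.of_dist_le_mul fun t ht r hr => ?_
  rw [dist_eq_norm, dist_eq_norm]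
  refine opNorm_le_bound _ (by positivity) fun ψ => ?_
  have := hs.norm_image_sub_le_of_norm_hasDerivWithin_le (hV ψ)
    (fun τ hτ => (D τ).le_of_opNorm_le (hD τ hτ) ψ) hr ht
  rwa [sub_apply, mul_right_comm]

theorem ContinuousLinearMap.continuous_of_hasDerivAt_apply
    {𝕜 E F : Type*} [NontriviallyNormedField 𝕜] [NormedAddCommGroup E] [NormedSpace 𝕜 E]
    [NormedAddCommGroup F] [NormedSpace 𝕜 F] [NormedSpace ℝ F] {V D : ℝ → E →L[𝕜] F}
    (hV : ∀ ψ t, HasDerivAt (fun τ => V τ ψ) (D t ψ) t)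
    (hD : ∀ t, ∃ M, ∀ᶠ s in 𝓝 t, ‖D s‖ ≤ M) : Continuous V := by
  refine continuous_iff_continuousAt.2 fun t => ?_
  obtain ⟨M, hM⟩ := hD t
  obtain ⟨ε, hε, hball⟩ := Metric.eventually_nhds_iff_ball.1 hM
  have hlip : LipschitzOnWith M.toNNReal V (Metric.ball t ε) :=
    lipschitzOnWith_of_hasDerivWithinAt_apply (convex_ball t ε)
      (fun ψ τ _ => (hV ψ τ).hasDerivWithinAt)
      fun τ hτ => (hball τ hτ).trans (Real.le_coe_toNNReal M)
  exact hlip.continuousOn.continuousAt (Metric.ball_mem_nhds t hε)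

theorem ContinuousLinearMap.adjoint_mul_self_eq_one_of_hasDerivAt {𝕜 H : Type*} [RCLike 𝕜]
    [NormedAddCommGroup H] [InnerProductSpace 𝕜 H] [CompleteSpace H] [NormedSpace ℝ H]
    {A V : ℝ → H →L[𝕜] H} (hskew : ∀ t, adjoint (A t) = -A t) (hV0 : V 0 = 1)
    (hV : ∀ ψ t, HasDerivAt (fun s => V s ψ) (A t (V t ψ)) t) (t : ℝ) :
    adjoint (V t) * V t = 1 := by
  ext ψ
  refine ext_inner_left 𝕜 fun φ => ?_
  have hderiv : ∀ τ, HasDerivAt (fun τ => inner 𝕜 (V τ φ) (V τ ψ)) 0 τ := by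
    intro τ
    have h := (hV φ τ).inner 𝕜 (hV ψ τ)
    rwa [← adjoint_inner_right (A τ), hskew τ, neg_apply, inner_neg_right, add_neg_cancel] at h
  have hconst := is_const_of_deriv_eq_zero (fun τ => (hderiv τ).differentiableAt)
    (fun τ => (hderiv τ).deriv) t 0
  simpa [adjoint_inner_right, hV0] using hconst

/-- If `A(t) = -iH(t)` is skew-adjoint (i.e. `H(t)` bounded self-adjoint) and strongly
continuous, the strong solution `V` of `V'(t) = A(t)V(t)`, `V(0) = 1`, is unitary, and
`U(t,s) := V(t)V(s)⁻¹ = V(t)V(s)*` is a unitary cocycle satisfying the propagator equation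
`d/dt U(t,s)ψ = A(t)U(t,s)ψ = -iH(t)U(t,s)ψ`. -/
theorem stmt_9 {H : Type*} [NormedAddCommGroup H] [InnerProductSpace ℂ H] [CompleteSpace H]
    (A : ℝ → H →L[ℂ] H) (hA : ∀ ψ : H, Continuous fun t => A t ψ)
    (hskew : ∀ t : ℝ, ContinuousLinearMap.adjoint (A t) = -(A t))
    (V : ℝ → H →L[ℂ] H) (hV0 : V 0 = 1)
    (hV : ∀ (ψ : H) (t : ℝ), HasDerivAt (fun s => V s ψ) (A t (V t ψ)) t) :
    (∀ t : ℝ, ContinuousLinearMap.adjoint (V t) * V t = 1 ∧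
        V t * ContinuousLinearMap.adjoint (V t) = 1) ∧
    (∀ t s r : ℝ,
        (V t * ContinuousLinearMap.adjoint (V s)) * (V s * ContinuousLinearMap.adjoint (V r))
          = V t * ContinuousLinearMap.adjoint (V r)) ∧
    (∀ (s : ℝ) (ψ : H) (t : ℝ),
        HasDerivAt (fun τ => (V τ * ContinuousLinearMap.adjoint (V s)) ψ)
          (A t ((V t * ContinuousLinearMap.adjoint (V s)) ψ)) t) := by
  have hiso : ∀ t, adjoint (V t) * V t = 1 :=
    adjoint_mul_self_eq_one_of_hasDerivAt hskew hV0 hV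
  have hiso_star : ∀ t, star (V t) * V t = 1 := by simpa only [star_eq_adjoint] using hiso
  have hcont : Continuous V := by
    refine continuous_of_hasDerivAt_apply (D := fun t => A t * V t) hV fun t => ?_
    obtain ⟨M, hM⟩ := exists_eventually_norm_le_of_continuous_apply hA t
    refine ⟨M, hM.mono fun s hs => ?_⟩
    calc ‖A s * V s‖ ≤ ‖A s‖ * ‖V s‖ := norm_mul_le _ _
      _ ≤ ‖A s‖ := mul_le_of_le_one_right (norm_nonneg _)
            (CStarRing.norm_le_one_of_star_mul_self_eq_one (hiso_star s))
      _ ≤ M := hs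
  have hunitary : ∀ t, V t ∈ unitary (H →L[ℂ] H) :=
    Unitary.mem_of_continuous_of_star_mul_self hcont hiso_star (x₀ := 0) (hV0 ▸ one_mem _)
  refine ⟨fun t => by simpa only [star_eq_adjoint] using Unitary.mem_iff.1 (hunitary t),
    fun t s r => ?_, fun s ψ t => hV (adjoint (V s) ψ) t⟩
  rw [mul_assoc, ← mul_assoc (adjoint (V s)), hiso s, one_mul]
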